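/- arXiv:2510.23498 — 2 statements merged into one kernel-verified Lean document; each statement's English description precedes it below -/
import Mathlib

section
/- Let g = h · Σ_{i=0}^{N−1} v_i and g̃ be computed by the recursion s_0 = 0, s_{i+1} = (s_i + h ṽ_i)(1 + r_i) with |r_i| ≤ u_H, where ‖v_i − ṽ_i‖ ≤ ε and ‖ṽ_i‖ ≤ M for all i (scalar case). Then |g − g̃| ≤ N h ε + C N u_H (N h M + terms of higher order in u_H); in particular if T = N h is fixed, |g − g̃| ≤ T ε + O(T M u_H / h). -/
/-!
The error `e n = s n - h * ∑_{i<n} ṽ i` of the high-precision accumulation satisfies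
`e (n+1) = e n * (1 + r n) + r n * h * ∑_{i≤n} ṽ i`: each step rounds a partial sum of size at
most `(n+1) h M` with relative error `u_H`, and earlier errors are amplified by at most
`1 + u_H`. The low-precision errors `v i - ṽ i` never interact with the rounding and simply add
up to at most `N h ε`.
-/

open Real Finset

lemma abs_sum_range_le_of_abs_le {f : ℕ → ℝ} {C : ℝ} (hf : ∀ i, |f i| ≤ C) (n : ℕ) :
    |∑ i ∈ range n, f i| ≤ n * C :=
  calc |∑ i ∈ range n, f i| ≤ ∑ i ∈ range n, |f i| := abs_sum_le_sum_abs _ _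
    _ ≤ ∑ _i ∈ range n, C := sum_le_sum fun i _ => hf i
    _ = n * C := by simp

section RoundedAccumulation

variable {s x r : ℕ → ℝ} {u B : ℝ}

lemma rounded_sum_sub_sum_succ (hsrec : ∀ i, s (i + 1) = (s i + x i) * (1 + r i)) (n : ℕ) :
    s (n + 1) - ∑ i ∈ range (n + 1), x i =
      (s n - ∑ i ∈ range n, x i) * (1 + r n) + r n * ∑ i ∈ range (n + 1), x i := by
  rw [hsrec, sum_range_succ]
  ring

lemma abs_rounded_sum_sub_sum_le (hs0 : s 0 = 0)
    (hsrec : ∀ i, s (i + 1) = (s i + x i) * (1 + r i))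
    (hr : ∀ i, |r i| ≤ u) (hx : ∀ i, |x i| ≤ B) (n : ℕ) :
    |s n - ∑ i ∈ range n, x i| ≤ n * u * (n * B) * (1 + u) ^ n := by
  have hu : 0 ≤ u := (abs_nonneg _).trans (hr 0)
  have hB : 0 ≤ B := (abs_nonneg _).trans (hx 0)
  induction n with
  | zero => simp [hs0]
  | succ n ih =>
    have hgrowth : |1 + r n| ≤ 1 + u :=
      (abs_add_le _ _).trans (by rw [abs_one]; linarith [hr n])
    have hpow : 1 ≤ (1 + u) ^ (n + 1) := one_le_pow₀ (by linarith)
    calc |s (n + 1) - ∑ i ∈ range (n + 1), x i|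
        ≤ |s n - ∑ i ∈ range n, x i| * |1 + r n| + |r n| * |∑ i ∈ range (n + 1), x i| := by
          rw [rounded_sum_sub_sum_succ hsrec, ← abs_mul, ← abs_mul]
          exact abs_add_le _ _
      _ ≤ n * u * (n * B) * (1 + u) ^ n * (1 + u) + u * ((n + 1 : ℕ) * B) := by
          gcongr
          · exact hr n
          · exact abs_sum_range_le_of_abs_le hx (n + 1)
      _ ≤ (n + 1 : ℕ) * u * ((n + 1 : ℕ) * B) * (1 + u) ^ (n + 1) := by
          rw [mul_assoc _ ((1 + u) ^ n), ← pow_succ]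
          push_cast
          linarith [mul_le_mul_of_nonneg_left hpow (by positivity : (0 : ℝ) ≤ u * B * (n + 1)),
            (by positivity : (0 : ℝ) ≤ n * u * B * (1 + u) ^ (n + 1))]

end RoundedAccumulation

theorem gradient_accumulation_error_general
    (v vt : ℕ → ℝ) (s : ℕ → ℝ) (r : ℕ → ℝ)
    (h ε M uH : ℝ) (N : ℕ)
    (hh : 0 < h)
    (hs0 : s 0 = 0)
    (hsrec : ∀ i, s (i + 1) = (s i + h * vt i) * (1 + r i))
    (hr : ∀ i, |r i| ≤ uH)
    (hv : ∀ i, |v i - vt i| ≤ ε)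
    (hvt : ∀ i, |vt i| ≤ M) :
    |h * (∑ i ∈ Finset.range N, v i) - s N| ≤
      N * h * ε + N * uH * (N * h * M) * (1 + uH) ^ N := by
  have hlow : |h * ∑ i ∈ range N, v i - h * ∑ i ∈ range N, vt i| ≤ N * h * ε := by
    rw [← mul_sub, ← sum_sub_distrib, abs_mul, abs_of_pos hh, mul_right_comm, mul_comm]
    exact mul_le_mul_of_nonneg_right (abs_sum_range_le_of_abs_le hv N) hh.le
  have hincrement (i : ℕ) : |h * vt i| ≤ h * M := by
    rw [abs_mul, abs_of_pos hh]
    exact mul_le_mul_of_nonneg_left (hvt i) hh.le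
  have hhigh := abs_rounded_sum_sub_sum_le hs0 hsrec hr hincrement N
  rw [← mul_sum, abs_sub_comm, ← mul_assoc (N : ℝ) h] at hhigh
  exact (abs_sub_le _ _ _).trans (add_le_add hlow hhigh)

theorem gradient_accumulation_error
    (v vt : ℕ → ℝ) (s : ℕ → ℝ) (r : ℕ → ℝ)
    (h ε M uH : ℝ) (N : ℕ)
    (hh : 0 < h) (hε : 0 ≤ ε) (hM : 0 ≤ M) (huH : 0 ≤ uH)
    (hs0 : s 0 = 0)
    (hsrec : ∀ i, s (i + 1) = (s i + h * vt i) * (1 + r i))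
    (hr : ∀ i, |r i| ≤ uH)
    (hv : ∀ i, |v i - vt i| ≤ ε)
    (hvt : ∀ i, |vt i| ≤ M) :
    |h * (∑ i ∈ Finset.range N, v i) - s N| ≤
      N * h * ε + N * uH * (N * h * M) * (1 + uH) ^ N :=
  gradient_accumulation_error_general v vt s r h ε M uH N hh hs0 hsrec hr hv hvt
end

section
/- Suppose the forward errors satisfy ‖δ_{y_i}‖ ≤ e^{t_N K₁} ‖δ_{y_0}‖ + (e^{t_N K₁} − 1)(K₂ u_L + K₃ u_H/h) for all i ≤ N, the terminal adjoint error satisfies ‖δ_{a_N}‖ ≤ (L/m) M_y ‖δ_{y_N}‖ + M_C u_L, and the adjoint recursion satisfies ‖δ_{a_{i−1}}‖ ≤ (1 + hγ)‖δ_{a_i}‖ + h(θ‖δ_{y_{i−1}}‖ + σ u_L + u_H/h). Then there exist constants K₄,…,K₇ depending only on (K₁,K₂,K₃,L,m,M_y,M_C,γ,θ,σ,t_N) such that ‖δ_{a_i}‖ ≤ e^{(t_N − t_i)K₄} ‖δ_{a_N}‖ + K₅‖δ_{y_0}‖ + K₆ u_L + K₇ u_H/h for all i, where t_i = i h. -/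
/-!
The forward bound gives a uniform bound `Y` on all `δy i`, so the adjoint recursion becomes
`δa (i-1) ≤ (1 + hγ) δa i + h C` with `C = θ Y + σ u_L + u_H / h` independent of `i`. Running the
discrete Grönwall inequality backwards from `i = N` gives
`δa i ≤ e^{(t_N - t_i) γ} (δa N + (t_N - t_i) C)`, and `C` is linear in `δy 0`, `u_L`, `u_H / h`.
-/

open Real

theorem backward_discrete_gronwall {a : ℕ → ℝ} {N : ℕ} {c b : ℝ} (ha : ∀ i, 0 ≤ a i)
    (hc : 0 ≤ c) (hb : 0 ≤ b)
    (hstep : ∀ i, 1 ≤ i → i ≤ N → a (i - 1) ≤ (1 + c) * a i + b) :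
    ∀ i ≤ N, a i ≤ (a N + ((N : ℝ) - i) * b) * exp (((N : ℝ) - i) * c) := by
  intro i hi
  -- For `j ≥ N` the truncated index `N - j` is stuck at `0`, where the step holds as `a 0 ≥ 0`.
  have hforward : ∀ j ≥ 0, a (N - (j + 1)) ≤ (1 + c) * a (N - j) + b := by
    intro j _
    rcases lt_or_ge j N with hj | hj
    · have := hstep (N - j) (by omega) (Nat.sub_le N j)
      rwa [show N - j - 1 = N - (j + 1) by omega] at this
    · rw [Nat.sub_eq_zero_of_le hj, Nat.sub_eq_zero_of_le (by omega)]
      nlinarith [ha 0]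
  have := discrete_gronwall (u := fun j => a (N - j)) (c := fun _ => c) (b := fun _ => b)
    (ha (N - 0)) hforward (fun _ _ => hc) (fun _ _ => hb) (Nat.zero_le (N - i))
  simpa [Nat.sub_sub_self hi, Nat.cast_sub hi] using this

theorem add_mul_mul_exp_le_of_le {A C γ s T : ℝ} (hC : 0 ≤ C) (hγ : 0 ≤ γ) (hs : 0 ≤ s)
    (hsT : s ≤ T) :
    (A + s * C) * exp (s * γ) ≤ exp (s * γ) * A + exp (T * γ) * (T * C) := by
  have hexp : exp (s * γ) ≤ exp (T * γ) := exp_le_exp.mpr (by gcongr)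
  have : exp (s * γ) * (s * C) ≤ exp (T * γ) * (T * C) := by gcongr
  linarith

theorem main_adjoint_combination_general
    (K₁ K₂ K₃ L m My MC γ θ σ T : ℝ)
    (hK₁ : 0 ≤ K₁) (hK₂ : 0 ≤ K₂) (hK₃ : 0 ≤ K₃)
    (hγ : 0 ≤ γ) (hθ : 0 ≤ θ) (hσ : 0 ≤ σ) (hT : 0 < T) :
    ∃ K₄ K₅ K₆ K₇ : ℝ, 0 ≤ K₄ ∧ 0 ≤ K₅ ∧ 0 ≤ K₆ ∧ 0 ≤ K₇ ∧
      ∀ (N : ℕ) (h uL uH : ℝ) (δy δa : ℕ → ℝ),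
        0 < h → (N : ℝ) * h = T →
        (∀ i, 0 ≤ δy i) → (∀ i, 0 ≤ δa i) →
        0 ≤ uL → 0 ≤ uH →
        (∀ i ≤ N, δy i ≤ Real.exp (T * K₁) * δy 0 +
          (Real.exp (T * K₁) - 1) * (K₂ * uL + K₃ * uH / h)) →
        (δa N ≤ (L / m) * My * δy N + MC * uL) →
        (∀ i, 1 ≤ i → i ≤ N →
          δa (i - 1) ≤ (1 + h * γ) * δa i +
            h * (θ * δy (i - 1) + σ * uL + uH / h)) →
        ∀ i ≤ N, δa i ≤ Real.exp ((T - i * h) * K₄) * δa N +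
          K₅ * δy 0 + K₆ * uL + K₇ * uH / h := by
  have hE : 0 ≤ exp (T * K₁) - 1 := by linarith [one_le_exp (by positivity : 0 ≤ T * K₁)]
  refine ⟨γ, T * exp (T * γ) * θ * exp (T * K₁),
    T * exp (T * γ) * (θ * (exp (T * K₁) - 1) * K₂ + σ),
    T * exp (T * γ) * (θ * (exp (T * K₁) - 1) * K₃ + 1), hγ, by positivity, by positivity,
    by positivity, ?_⟩
  intro N h uL uH δy δa hh hNh hy ha huL huH hfwd _ hrec i hi
  set Y := exp (T * K₁) * δy 0 + (exp (T * K₁) - 1) * (K₂ * uL + K₃ * uH / h)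
  set C := θ * Y + σ * uL + uH / h with hC_def
  have hC : 0 ≤ C := by
    have : 0 ≤ Y := (hy 0).trans (hfwd 0 (Nat.zero_le N))
    positivity
  have hstep : ∀ i, 1 ≤ i → i ≤ N → δa (i - 1) ≤ (1 + h * γ) * δa i + h * C := by
    intro i hi₁ hiN
    refine (hrec i hi₁ hiN).trans ?_
    rw [hC_def]
    gcongr
    exact hfwd (i - 1) (by omega)
  have hgronwall := backward_discrete_gronwall ha (by positivity) (by positivity) hstep i hi
  have hts : ((N : ℝ) - i) * h = T - i * h := by rw [← hNh]; ring
  have hti : (i : ℝ) * h ≤ T := by rw [← hNh]; gcongr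
  have hih : 0 ≤ (i : ℝ) * h := by positivity
  calc δa i ≤ (δa N + (T - i * h) * C) * exp ((T - i * h) * γ) := by
        simpa only [← mul_assoc, mul_right_comm _ h, hts] using hgronwall
    _ ≤ exp ((T - i * h) * γ) * δa N + exp (T * γ) * (T * C) :=
        add_mul_mul_exp_le_of_le hC hγ (by linarith) (by linarith)
    _ = _ := by rw [hC_def]; ring

theorem main_adjoint_combination
    (K₁ K₂ K₃ L m My MC γ θ σ T : ℝ)
    (hK₁ : 0 ≤ K₁) (hK₂ : 0 ≤ K₂) (hK₃ : 0 ≤ K₃)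
    (hL : 0 ≤ L) (hm : 0 < m) (hMy : 0 ≤ My) (hMC : 0 ≤ MC)
    (hγ : 0 ≤ γ) (hθ : 0 ≤ θ) (hσ : 0 ≤ σ) (hT : 0 < T) :
    ∃ K₄ K₅ K₆ K₇ : ℝ, 0 ≤ K₄ ∧ 0 ≤ K₅ ∧ 0 ≤ K₆ ∧ 0 ≤ K₇ ∧
      ∀ (N : ℕ) (h uL uH : ℝ) (δy δa : ℕ → ℝ),
        0 < h → (N : ℝ) * h = T →
        (∀ i, 0 ≤ δy i) → (∀ i, 0 ≤ δa i) →
        0 ≤ uL → 0 ≤ uH →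
        (∀ i ≤ N, δy i ≤ Real.exp (T * K₁) * δy 0 +
          (Real.exp (T * K₁) - 1) * (K₂ * uL + K₃ * uH / h)) →
        (δa N ≤ (L / m) * My * δy N + MC * uL) →
        (∀ i, 1 ≤ i → i ≤ N →
          δa (i - 1) ≤ (1 + h * γ) * δa i +
            h * (θ * δy (i - 1) + σ * uL + uH / h)) →
        ∀ i ≤ N, δa i ≤ Real.exp ((T - i * h) * K₄) * δa N +
          K₅ * δy 0 + K₆ * uL + K₇ * uH / h :=
  main_adjoint_combination_general K₁ K₂ K₃ L m My MC γ θ σ T hK₁ hK₂ hK₃ hγ hθ hσ hT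
end
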